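/- For all complex numbers t, f, g, a, b, c, d with t ≠ 0, f ≠ 0 and f ≠ 1, the function ε ↦ ε²·F_VI(1+εt, f, g/ε, a, b, −d/ε² + c/ε, d/ε²) tends to F_V(t,f,g,a,b,c,d) = (1/(2f) + 1/(f−1))g² − g/t + ((f−1)²/t²)(af + b/f) + cf/t + d·f(f+1)/(f−1) as ε → 0 along nonzero complex values of ε (punctured neighborhood filter of 0 in ℂ). -/

import Mathlib

/-- Right-hand side of the sixth Painlevé equation. -/
noncomputable def FVI (x u v α β γ δ : ℂ) : ℂ :=
  (1 / 2) * (1 / u + 1 / (u - 1) + 1 / (u - x)) * v ^ 2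
    - (1 / x + 1 / (x - 1) + 1 / (u - x)) * v
    + (u * (u - 1) * (u - x) / (x ^ 2 * (x - 1) ^ 2)) *
        (α + β * x / u ^ 2 + γ * (x - 1) / (u - 1) ^ 2 + δ * x * (x - 1) / (u - x) ^ 2)

/-- Right-hand side of the fifth Painlevé equation. -/
noncomputable def FV (x u v α β γ δ : ℂ) : ℂ :=
  (1 / (2 * u) + 1 / (u - 1)) * v ^ 2 - v / x
    + ((u - 1) ^ 2 / x ^ 2) * (α * u + β / u) + γ * u / x + δ * u * (u + 1) / (u - 1)

/-!
Put `x = 1 + εt`. Since `x - 1 = εt`, multiplying by `ε²` cancels every negative power of `ε`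
in `F_VI` except in the `γ`- and `δ`-terms, whose `d/ε` parts cancel against each other:
`x / (f - x)² - 1 / (f - 1)² = εt (f² - 1 - εt) / ((f - x)² (f - 1)²)`.
What remains is a rational function of `ε` that is regular at `ε = 0`, and its value there is
`F_V(t, f, g, a, b, c, d)`.
-/

open Filter Topology

noncomputable def rescaledFVI (t f g a b c d ε : ℂ) : ℂ :=
  (1 / 2) * (1 / f + 1 / (f - 1) + 1 / (f - (1 + ε * t))) * g ^ 2
    - (ε / (1 + ε * t) + 1 / t + ε / (f - (1 + ε * t))) * g
    + (f * (f - 1) * (f - (1 + ε * t)) / ((1 + ε * t) ^ 2 * t ^ 2)) *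
        (a + b * (1 + ε * t) / f ^ 2 + c * t / (f - 1) ^ 2
          + d * t ^ 2 * (f ^ 2 - 1 - ε * t) / ((f - (1 + ε * t)) ^ 2 * (f - 1) ^ 2))

theorem sq_mul_FVI_eq_rescaledFVI {t f g a b c d ε : ℂ} (hf1 : f ≠ 1) (hε : ε ≠ 0)
    (hfx : f ≠ 1 + ε * t) :
    ε ^ 2 * FVI (1 + ε * t) f (g / ε) a b (-d / ε ^ 2 + c / ε) (d / ε ^ 2)
      = rescaledFVI t f g a b c d ε := by
  have hf1' : f - 1 ≠ 0 := sub_ne_zero.mpr hf1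
  have hfx' : f - (1 + ε * t) ≠ 0 := sub_ne_zero.mpr hfx
  have hx1 : 1 + ε * t - 1 = ε * t := by ring
  rw [FVI, rescaledFVI, hx1]
  field_simp
  ring

theorem continuousAt_rescaledFVI {t f : ℂ} (ht : t ≠ 0) (hf1 : f ≠ 1) (g a b c d : ℂ) :
    ContinuousAt (rescaledFVI t f g a b c d) 0 := by
  have hf1' : f - 1 ≠ 0 := sub_ne_zero.mpr hf1
  unfold rescaledFVI
  fun_prop (disch := simp [ht, hf1'])

theorem rescaledFVI_zero {t f : ℂ} (ht : t ≠ 0) (hf0 : f ≠ 0) (hf1 : f ≠ 1) (g a b c d : ℂ) :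
    rescaledFVI t f g a b c d 0 = FV t f g a b c d := by
  have hf1' : f - 1 ≠ 0 := sub_ne_zero.mpr hf1
  simp only [rescaledFVI, FV, zero_mul, add_zero, sub_zero, mul_one, one_pow, zero_div]
  field_simp
  ring

theorem eventually_one_add_mul_ne {R : Type*} [Ring R] [TopologicalSpace R]
    [IsTopologicalRing R] [T1Space R] (t : R) {z : R} (hz : 1 ≠ z) :
    ∀ᶠ ε in 𝓝 0, 1 + ε * t ≠ z :=
  ContinuousAt.eventually_ne (by fun_prop) (by simpa using hz)

/-- Degeneration of Painlevé VI to Painlevé V: for all `t f g a b c d : ℂ` with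
`t ≠ 0`, `f ≠ 0`, `f ≠ 1`, the function
`ε ↦ ε²·F_VI(1+εt, f, g/ε, a, b, −d/ε² + c/ε, d/ε²)` tends to `F_V(t,f,g,a,b,c,d)`
as `ε → 0` along nonzero complex values. -/
theorem stmt_6 (t f g a b c d : ℂ) (ht : t ≠ 0) (hf0 : f ≠ 0) (hf1 : f ≠ 1) :
    Filter.Tendsto
      (fun ε : ℂ =>
        ε ^ 2 * FVI (1 + ε * t) f (g / ε) a b (-d / ε ^ 2 + c / ε) (d / ε ^ 2))
      (nhdsWithin 0 {0}ᶜ) (nhds (FV t f g a b c d)) := by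
  have hlim : Tendsto (rescaledFVI t f g a b c d) (𝓝[≠] 0) (𝓝 (FV t f g a b c d)) := by
    rw [← rescaledFVI_zero ht hf0 hf1 g a b c d]
    exact (continuousAt_rescaledFVI ht hf1 g a b c d).tendsto.mono_left nhdsWithin_le_nhds
  refine hlim.congr' ?_
  filter_upwards [self_mem_nhdsWithin,
    nhdsWithin_le_nhds (eventually_one_add_mul_ne t (Ne.symm hf1))] with ε hε hfx
  exact (sq_mul_FVI_eq_rescaledFVI hf1 hε (Ne.symm hfx)).symm
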